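/- For the one-dimensional case: if v₁ ≤ v₂ ≤ … ≤ v_n are points in [0,1] and g : [0,1] → ℝ is continuously differentiable, then |(1/n) Σ_{i=1}^n g(vᵢ) − ∫₀¹ g(u) du| ≤ (∫₀¹ |g′(u)| du) · D*(P_n), where D*(P_n) = sup_{a ∈ [0,1]} |(1/n) Σᵢ 1{vᵢ < a} − a|. -/

import Mathlib

/-!
Writing `F` for the empirical distribution function of the points, integration by parts turns
the quadrature error into `∫₀¹ (F u - u) g'(u) du`: each point contributes
`∫₀¹ 1{vᵢ < u} g'(u) du = g 1 - g vᵢ`, while `∫₀¹ u g'(u) du = g 1 - ∫₀¹ g`.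
The integrand is bounded by `D*(P_n) |g'(u)|`.
-/

open MeasureTheory Set

noncomputable def localDiscrepancy {n : ℕ} (v : Fin n → ℝ) (a : ℝ) : ℝ :=
  (1 / n : ℝ) * (Finset.univ.filter (fun i => v i < a)).card - a

theorem abs_localDiscrepancy_le_one {n : ℕ} (v : Fin n → ℝ) {a : ℝ} (ha : a ∈ Icc (0 : ℝ) 1) :
    |localDiscrepancy v a| ≤ 1 := by
  set k : ℝ := ((Finset.univ.filter (fun i => v i < a)).card : ℝ)
  have hk : k ≤ n := Nat.cast_le.2 ((Finset.card_filter_le _ _).trans (Finset.card_fin n).le)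
  have hfrac_le : 1 / n * k ≤ 1 := by
    rw [one_div_mul_eq_div]
    exact div_le_one_of_le₀ hk n.cast_nonneg
  have hfrac_nonneg : 0 ≤ 1 / n * k := by positivity
  rw [localDiscrepancy, abs_sub_le_iff]
  constructor <;> linarith [ha.1, ha.2]

theorem localDiscrepancy_mul {n : ℕ} (v : Fin n → ℝ) (f : ℝ → ℝ) (u : ℝ) :
    localDiscrepancy v u * f u = (1 / n : ℝ) * ∑ i, (Ioi (v i)).indicator f u - u * f u := by
  have hcount : ((Finset.univ.filter (fun i => v i < u)).card : ℝ) * f u =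
      ∑ i, (Ioi (v i)).indicator f u := by
    rw [Finset.card_filter, Nat.cast_sum, Finset.sum_mul]
    refine Finset.sum_congr rfl fun i _ => ?_
    by_cases h : v i < u <;> simp [h]
  rw [localDiscrepancy, sub_mul, mul_assoc, hcount]

theorem intervalIntegral.integral_indicator_Ioi {E : Type*} [NormedAddCommGroup E]
    [NormedSpace ℝ E] {μ : Measure ℝ} {f : ℝ → E} {a b c : ℝ} (hc : c ∈ Icc a b) :
    ∫ x in a..b, (Ioi c).indicator f x ∂μ = ∫ x in c..b, f x ∂μ := by
  rw [intervalIntegral.integral_of_le (hc.1.trans hc.2), setIntegral_indicator measurableSet_Ioi,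
    Ioc_inter_Ioi, sup_eq_right.2 hc.1, intervalIntegral.integral_of_le hc.2]

section Deriv

variable {g : ℝ → ℝ}

theorem integral_indicator_Ioi_deriv (hg : ContDiff ℝ 1 g) {a b c : ℝ} (hc : c ∈ Icc a b) :
    ∫ u in a..b, (Ioi c).indicator (deriv g) u = g b - g c := by
  rw [intervalIntegral.integral_indicator_Ioi hc]
  exact intervalIntegral.integral_deriv_eq_sub (fun x _ => hg.differentiable one_ne_zero x)
    ((hg.continuous_deriv le_rfl).intervalIntegrable c b)

theorem integral_id_mul_deriv (hg : ContDiff ℝ 1 g) (a b : ℝ) :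
    ∫ u in a..b, u * deriv g u = b * g b - a * g a - ∫ u in a..b, g u := by
  simpa using intervalIntegral.integral_mul_deriv_eq_deriv_mul
    (fun x _ => hasDerivAt_id x) (fun x _ => (hg.differentiable one_ne_zero x).hasDerivAt)
    intervalIntegrable_const ((hg.continuous_deriv le_rfl).intervalIntegrable a b)

theorem integral_localDiscrepancy_mul_deriv {n : ℕ} (hn : n ≠ 0) {v : Fin n → ℝ}
    (hv : ∀ i, v i ∈ Icc (0 : ℝ) 1) (hg : ContDiff ℝ 1 g) :
    ∫ u in (0 : ℝ)..1, localDiscrepancy v u * deriv g u =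
      (∫ u in (0 : ℝ)..1, g u) - (1 / n : ℝ) * ∑ i, g (v i) := by
  have hg' : IntervalIntegrable (deriv g) volume 0 1 :=
    (hg.continuous_deriv le_rfl).intervalIntegrable 0 1
  have hind : ∀ i, IntervalIntegrable ((Ioi (v i)).indicator (deriv g)) volume 0 1 :=
    fun i => ⟨hg'.1.indicator measurableSet_Ioi, hg'.2.indicator measurableSet_Ioi⟩
  have hsum : IntervalIntegrable (fun u => ∑ i, (Ioi (v i)).indicator (deriv g) u) volume 0 1 := by
    simpa only [← Finset.sum_apply] using IntervalIntegrable.sum _ fun i _ => hind i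
  have hid : IntervalIntegrable (fun u => u * deriv g u) volume 0 1 :=
    (continuous_id.mul (hg.continuous_deriv le_rfl)).intervalIntegrable 0 1
  simp_rw [localDiscrepancy_mul]
  rw [intervalIntegral.integral_sub (hsum.const_mul _) hid,
    intervalIntegral.integral_const_mul, intervalIntegral.integral_finsetSum fun i _ => hind i,
    integral_id_mul_deriv hg]
  simp only [integral_indicator_Ioi_deriv hg (hv _), Finset.sum_sub_distrib, Finset.sum_const,
    Finset.card_univ, Fintype.card_fin, nsmul_eq_mul]
  field_simp
  ring

end Deriv

theorem abs_integral_mul_le_of_abs_le {φ ψ : ℝ → ℝ} {a b D : ℝ} (hab : a ≤ b)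
    (hφ : ∀ u ∈ Icc a b, |φ u| ≤ D) (hψ : IntervalIntegrable ψ volume a b) :
    |∫ u in a..b, φ u * ψ u| ≤ D * ∫ u in a..b, |ψ u| := by
  rw [← intervalIntegral.integral_const_mul D, ← Real.norm_eq_abs]
  refine intervalIntegral.norm_integral_le_of_norm_le hab (ae_of_all _ fun u hu => ?_)
    (hψ.abs.const_mul D)
  rw [Real.norm_eq_abs, abs_mul]
  exact mul_le_mul_of_nonneg_right (hφ u (Ioc_subset_Icc_self hu)) (abs_nonneg _)

theorem koksma_one_dim_general (n : ℕ) (hn : 0 < n)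
    (v : Fin n → ℝ) (hv : ∀ i, v i ∈ Set.Icc (0:ℝ) 1)
    (g : ℝ → ℝ) (hg : ContDiff ℝ 1 g) :
    |(1 / n : ℝ) * ∑ i, g (v i) - ∫ u in (0:ℝ)..1, g u| ≤
      (∫ u in (0:ℝ)..1, |deriv g u|) *
        sSup { r : ℝ | ∃ a ∈ Set.Icc (0:ℝ) 1,
          r = |(1 / n : ℝ) * (Finset.univ.filter (fun i => v i < a)).card - a| } := by
  have hbdd : BddAbove {r : ℝ | ∃ a ∈ Icc (0 : ℝ) 1, r = |localDiscrepancy v a|} :=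
    ⟨1, by rintro r ⟨a, ha, rfl⟩; exact abs_localDiscrepancy_le_one v ha⟩
  rw [abs_sub_comm, ← integral_localDiscrepancy_mul_deriv hn.ne' hv hg, mul_comm]
  exact abs_integral_mul_le_of_abs_le zero_le_one (fun u hu => le_csSup hbdd ⟨u, hu, rfl⟩)
    ((hg.continuous_deriv le_rfl).intervalIntegrable 0 1)

/-- one-dimensional Koksma inequality: if `v₁ ≤ … ≤ v_n` are points in `[0,1]`
and `g : [0,1] → ℝ` is continuously differentiable, then
`|(1/n) Σ g(vᵢ) − ∫₀¹ g| ≤ (∫₀¹ |g′|) · D*(P_n)` where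
`D*(P_n) = sup_{a ∈ [0,1]} |(1/n) Σᵢ 1{vᵢ < a} − a|`. -/
theorem koksma_one_dim (n : ℕ) (hn : 0 < n)
    (v : Fin n → ℝ) (hv : ∀ i, v i ∈ Set.Icc (0:ℝ) 1)
    (hsorted : Monotone v)
    (g : ℝ → ℝ) (hg : ContDiff ℝ 1 g) :
    |(1 / n : ℝ) * ∑ i, g (v i) - ∫ u in (0:ℝ)..1, g u| ≤
      (∫ u in (0:ℝ)..1, |deriv g u|) *
        sSup { r : ℝ | ∃ a ∈ Set.Icc (0:ℝ) 1,
          r = |(1 / n : ℝ) * (Finset.univ.filter (fun i => v i < a)).card - a| } :=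
  koksma_one_dim_general n hn v hv g hg
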